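/- arXiv:2206.00177 — 4 statements merged into one kernel-verified Lean document; each statement's English description precedes it below -/
import Mathlib

section
/- Let M be a finite-horizon MDP with reward r and M' an MDP with the same transitions and reward r' ≤ r. Let π* be optimal for M and π' be optimal (greedy) for M'. Then the suboptimality satisfies V₀* − V₀^{π'} ≤ V₀* − V'₀* = Σ_{h=1}^H E_{π*}[rₕ(sₕ,aₕ) − r'ₕ(sₕ,aₕ)], i.e., the suboptimality of the pessimistically learned policy is bounded by the expected total deficit along trajectories of the optimal policy. -/
/-- `val P r π n h s` : expected cumulative reward of running deterministic policy `π`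
for `n` steps starting at time `h` in state `s`; `Vₕ^π(s) = val P r π (H + 1 - h) h s`. -/
noncomputable def val {S A : Type} [Fintype S]
    (P : ℕ → S → A → S → ℝ) (r : ℕ → S → A → ℝ) (π : ℕ → S → A) :
    ℕ → ℕ → S → ℝ
  | 0, _, _ => 0
  | n + 1, h, s => r h s (π h s) + ∑ s', P h s (π h s) s' * val P r π n (h + 1) s'

/-- `occ P π p₀ (h-1) s` is the probability `d_h^π(s)` of being in state `s` at time
step `h` when running `π` from initial distribution `p₀`. -/
noncomputable def occ {S A : Type} [Fintype S]
    (P : ℕ → S → A → S → ℝ) (π : ℕ → S → A) (p₀ : S → ℝ) : ℕ → S → ℝ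
  | 0, s => p₀ s
  | n + 1, s' => ∑ s, occ P π p₀ n s * P (n + 1) s (π (n + 1) s) s'

/-!
Rewards enter the value function linearly, so `V_r^π − V_{r'}^π = V_{r − r'}^π`, which is
nonnegative when `r' ≤ r`; this gives the first inequality. For the second, optimality of `πpes`
for `r'` lets us replace `V'^{πpes}` by the smaller `V'^{π*}`, and
`V^{π*} − V'^{π*} = V_{r−r'}^{π*}` unrolls, step by step through the occupancy measures of `π*`,
into the expected total deficit.
-/

section

variable {S A : Type} [Fintype S] (P : ℕ → S → A → S → ℝ) (π : ℕ → S → A)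

lemma val_sub (r r' : ℕ → S → A → ℝ) (n h : ℕ) (s : S) :
    val P (r - r') π n h s = val P r π n h s - val P r' π n h s := by
  induction n generalizing h s with
  | zero => simp [val]
  | succ n ih =>
    simp only [val, ih, Pi.sub_apply, mul_sub, Finset.sum_sub_distrib]
    ring

variable {P}

lemma val_nonneg (hP : ∀ h s a s', 0 ≤ P h s a s') {r : ℕ → S → A → ℝ}
    (hr : ∀ h s a, 0 ≤ r h s a) (n h : ℕ) (s : S) :
    0 ≤ val P r π n h s := by
  induction n generalizing h s with
  | zero => simp [val]
  | succ n ih =>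
    exact add_nonneg (hr h s (π h s))
      (Finset.sum_nonneg fun s' _ => mul_nonneg (hP h s (π h s) s') (ih (h + 1) s'))

lemma val_mono (hP : ∀ h s a s', 0 ≤ P h s a s') {r r' : ℕ → S → A → ℝ}
    (hr : ∀ h s a, r' h s a ≤ r h s a) (n h : ℕ) (s : S) :
    val P r' π n h s ≤ val P r π n h s := by
  rw [← sub_nonneg, ← val_sub]
  exact val_nonneg π hP (fun h s a => sub_nonneg.mpr (hr h s a)) n h s

variable (P) (p₀ : S → ℝ)

lemma sum_occ_mul_sum_transition (m : ℕ) (f : S → ℝ) :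
    ∑ s, occ P π p₀ m s * ∑ s', P (m + 1) s (π (m + 1) s) s' * f s'
      = ∑ s', occ P π p₀ (m + 1) s' * f s' := by
  simp only [occ, Finset.mul_sum, Finset.sum_mul]
  rw [Finset.sum_comm]
  simp only [mul_assoc]

lemma sum_occ_mul_val (r : ℕ → S → A → ℝ) (n m : ℕ) :
    ∑ s, occ P π p₀ m s * val P r π n (m + 1) s
      = ∑ h ∈ Finset.Icc (m + 1) (m + n), ∑ s, occ P π p₀ (h - 1) s * r h s (π h s) := by
  induction n generalizing m with
  | zero => simp [val]
  | succ n ih =>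
    simp only [val, mul_add, Finset.sum_add_distrib, sum_occ_mul_sum_transition, ih]
    rw [show m + (n + 1) = m + 1 + n by omega,
      ← Finset.insert_Icc_add_one_left_eq_Icc (a := m + 1) (b := m + 1 + n) (by omega),
      Finset.sum_insert (by simp)]
    rfl

lemma sum_init_mul_val (r : ℕ → S → A → ℝ) (H : ℕ) :
    ∑ s, p₀ s * val P r π H 1 s
      = ∑ h ∈ Finset.Icc 1 H, ∑ s, occ P π p₀ (h - 1) s * r h s (π h s) := by
  simpa only [zero_add, occ] using sum_occ_mul_val P π p₀ r H 0

end

theorem stmt_9_general {S A : Type} [Fintype S] (H : ℕ)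
    (P : ℕ → S → A → S → ℝ) (hP0 : ∀ h s a s', 0 ≤ P h s a s')
    (p₀ : S → ℝ) (hp₀ : ∀ s, 0 ≤ p₀ s)
    (r r' : ℕ → S → A → ℝ) (hr : ∀ h s a, r' h s a ≤ r h s a)
    (πstar πpes : ℕ → S → A)
    (hopt' : ∀ (π : ℕ → S → A) n h s, val P r' π n h s ≤ val P r' πpes n h s) :
    (∑ s, p₀ s * val P r πstar H 1 s) - (∑ s, p₀ s * val P r πpes H 1 s)
      ≤ (∑ s, p₀ s * val P r πstar H 1 s) - (∑ s, p₀ s * val P r' πpes H 1 s) ∧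
    (∑ s, p₀ s * val P r πstar H 1 s) - (∑ s, p₀ s * val P r' πpes H 1 s)
      ≤ ∑ h ∈ Finset.Icc 1 H, ∑ s,
          occ P πstar p₀ (h - 1) s *
            (r h s (πstar h s) - r' h s (πstar h s)) := by
  refine ⟨sub_le_sub_left (Finset.sum_le_sum fun s _ => ?_) _, ?_⟩
  · exact mul_le_mul_of_nonneg_left (val_mono πpes hP0 hr H 1 s) (hp₀ s)
  have hpes : ∑ s, p₀ s * val P r' πstar H 1 s ≤ ∑ s, p₀ s * val P r' πpes H 1 s :=
    Finset.sum_le_sum fun s _ => mul_le_mul_of_nonneg_left (hopt' πstar H 1 s) (hp₀ s)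
  have hdeficit : (∑ s, p₀ s * val P r πstar H 1 s) - ∑ s, p₀ s * val P r' πstar H 1 s
      = ∑ h ∈ Finset.Icc 1 H, ∑ s,
          occ P πstar p₀ (h - 1) s * (r h s (πstar h s) - r' h s (πstar h s)) := by
    simp only [← Finset.sum_sub_distrib, ← mul_sub, ← val_sub]
    exact sum_init_mul_val P πstar p₀ (r - r') H
  linarith

theorem stmt_9 {S A : Type} [Fintype S] (H : ℕ)
    (P : ℕ → S → A → S → ℝ) (hP0 : ∀ h s a s', 0 ≤ P h s a s')
    (hP1 : ∀ h s a, ∑ s', P h s a s' = 1)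
    (p₀ : S → ℝ) (hp₀ : ∀ s, 0 ≤ p₀ s) (hp₀1 : ∑ s, p₀ s = 1)
    (r r' : ℕ → S → A → ℝ) (hr : ∀ h s a, r' h s a ≤ r h s a)
    (πstar πpes : ℕ → S → A)
    (hopt : ∀ (π : ℕ → S → A) n h s, val P r π n h s ≤ val P r πstar n h s)
    (hopt' : ∀ (π : ℕ → S → A) n h s, val P r' π n h s ≤ val P r' πpes n h s) :
    (∑ s, p₀ s * val P r πstar H 1 s) - (∑ s, p₀ s * val P r πpes H 1 s)
      ≤ (∑ s, p₀ s * val P r πstar H 1 s) - (∑ s, p₀ s * val P r' πpes H 1 s) ∧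
    (∑ s, p₀ s * val P r πstar H 1 s) - (∑ s, p₀ s * val P r' πpes H 1 s)
      ≤ ∑ h ∈ Finset.Icc 1 H, ∑ s,
          occ P πstar p₀ (h - 1) s *
            (r h s (πstar h s) - r' h s (πstar h s)) :=
  stmt_9_general H P hP0 p₀ hp₀ r r' hr πstar πpes hopt'
end

section
/- For a finite-horizon MDP, any deterministic policy π, any bounded functions Vₕ: S → [0, H] (h = 1,…,H+1 with V_{H+1} = 0), and any starting state distribution, the following telescoping identity holds: Σ_{h=h'}^H d^{π⊤}_h (P^π_h(V_{h+1}∘V_{h+1}) − (P^π_h V_{h+1})∘(P^π_h V_{h+1})) = −d^{π⊤}_{h'}(V_{h'}∘V_{h'}) + Σ_{h=h'}^H d^{π⊤}_h (Vₕ − P^π_h V_{h+1})∘(Vₕ + P^π_h V_{h+1}), where d^π_h is the state distribution at step h under π and P^π_h is the induced state transition matrix satisfying d^{π⊤}_h P^π_h = d^{π⊤}_{h+1}. -/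
lemma telescope_aux (f : ℕ → ℝ) (h₀ : ℕ) :
    ∀ H, h₀ ≤ H →
      ∑ h ∈ Finset.Icc h₀ H, f (h + 1)
        = -f h₀ + (∑ h ∈ Finset.Icc h₀ H, f h) + f (H + 1) := by
  intro H hle
  induction H with
  | zero =>
    interval_cases h₀
    simp
  | succ n ih =>
    rcases Nat.lt_or_ge h₀ (n + 1) with h | h
    · have hle' : h₀ ≤ n := Nat.lt_succ_iff.mp h
      rw [Finset.sum_Icc_succ_top (by omega), Finset.sum_Icc_succ_top (by omega), ih hle']
      ring
    · have : h₀ = n + 1 := le_antisymm hle h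
      subst this
      simp

theorem stmt_14 {S : Type} [Fintype S] (h₀ H : ℕ) (hle : h₀ ≤ H)
    (d : ℕ → S → ℝ) (Pm : ℕ → S → S → ℝ) (V : ℕ → S → ℝ)
    (hd0 : ∀ h s, 0 ≤ d h s) (hd1 : ∀ h, ∑ s, d h s = 1)
    (hflow : ∀ h s', ∑ s, d h s * Pm h s s' = d (h + 1) s')
    (hV0 : ∀ h s, 0 ≤ V h s) (hVH : ∀ h s, V h s ≤ (H : ℝ))
    (hVend : ∀ s, V (H + 1) s = 0) :
    ∑ h ∈ Finset.Icc h₀ H, ∑ s, d h s *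
        ((∑ s', Pm h s s' * (V (h + 1) s') ^ 2) - (∑ s', Pm h s s' * V (h + 1) s') ^ 2)
      = -(∑ s, d h₀ s * (V h₀ s) ^ 2)
        + ∑ h ∈ Finset.Icc h₀ H, ∑ s, d h s *
            (V h s - ∑ s', Pm h s s' * V (h + 1) s')
            * (V h s + ∑ s', Pm h s s' * V (h + 1) s') := by
  set f : ℕ → ℝ := fun h => ∑ s, d h s * (V h s) ^ 2 with hf
  have hA : ∀ h, ∑ s, d h s * (∑ s', Pm h s s' * (V (h + 1) s') ^ 2) = f (h + 1) := by
    intro h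
    rw [hf]
    simp only [Finset.mul_sum]
    rw [Finset.sum_comm]
    refine Finset.sum_congr rfl fun s' _ => ?_
    have h2 : ∀ s, d h s * (Pm h s s' * V (h + 1) s' ^ 2)
        = d h s * Pm h s s' * V (h + 1) s' ^ 2 := fun s => by ring
    simp_rw [h2]
    rw [← Finset.sum_mul, hflow h s']
  have key : ∑ h ∈ Finset.Icc h₀ H, f (h + 1)
      = -f h₀ + ∑ h ∈ Finset.Icc h₀ H, f h := by
    have := telescope_aux f h₀ H hle
    have hend : f (H + 1) = 0 := by
      simp [hf, hVend]
    rw [this, hend, add_zero]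
  calc ∑ h ∈ Finset.Icc h₀ H, ∑ s, d h s *
        ((∑ s', Pm h s s' * (V (h + 1) s') ^ 2) - (∑ s', Pm h s s' * V (h + 1) s') ^ 2)
      = ∑ h ∈ Finset.Icc h₀ H, (f (h + 1) - ∑ s, d h s * (∑ s', Pm h s s' * V (h + 1) s') ^ 2) := by
        refine Finset.sum_congr rfl fun h _ => ?_
        rw [← hA h, ← Finset.sum_sub_distrib]
        exact Finset.sum_congr rfl fun s _ => by ring
    _ = -f h₀ + ∑ h ∈ Finset.Icc h₀ H, (f h - ∑ s, d h s * (∑ s', Pm h s s' * V (h + 1) s') ^ 2) := by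
        rw [Finset.sum_sub_distrib, Finset.sum_sub_distrib, key]; ring
    _ = -(∑ s, d h₀ s * (V h₀ s) ^ 2)
        + ∑ h ∈ Finset.Icc h₀ H, ∑ s, d h s *
            (V h s - ∑ s', Pm h s s' * V (h + 1) s')
            * (V h s + ∑ s', Pm h s s' * V (h + 1) s') := by
        rw [hf]
        congr 1
        refine Finset.sum_congr rfl fun h _ => ?_
        rw [← Finset.sum_sub_distrib]
        exact Finset.sum_congr rfl fun s _ => by ring
end

section
/- Let dₕ ∈ Δ(S) for h = h',…,H be occupancy measures of a policy (so Σ_s dₕ(s) = 1), suppose Var values σₕ(s) ≥ 0 satisfy Σ_{h=h'}^H Σ_s dₕ(s)σₕ(s) ≤ 4H·Σ_{h=h'}^H Σ_s dₕ(s)bₕ(s) + 2H², and each bₕ(s) ≤ 2√(σₕ(s)·ι/n) + 3Hι/n for a common n ≥ 1 and ι ≥ 1. Then Σ_{h=h'}^H Σ_s dₕ(s)bₕ(s) ≤ C·(√(H³ι/n) + H²ι/n) for some absolute constant C. -/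
private lemma sqrt_add_le' {a b : ℝ} (ha : 0 ≤ a) (hb : 0 ≤ b) :
    Real.sqrt (a + b) ≤ Real.sqrt a + Real.sqrt b := by
  have h : a + b ≤ (Real.sqrt a + Real.sqrt b) ^ 2 := by
    nlinarith [Real.sq_sqrt ha, Real.sq_sqrt hb, Real.sqrt_nonneg a, Real.sqrt_nonneg b,
      mul_nonneg (Real.sqrt_nonneg a) (Real.sqrt_nonneg b)]
  calc Real.sqrt (a + b) ≤ Real.sqrt ((Real.sqrt a + Real.sqrt b) ^ 2) := Real.sqrt_le_sqrt h
    _ = Real.sqrt a + Real.sqrt b := Real.sqrt_sq (by positivity)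

set_option maxHeartbeats 1600000 in
theorem stmt_15 :
    ∃ C : ℝ, 0 < C ∧
      ∀ (S : Type) (_ : Fintype S) (h₀ H : ℕ) (d σ b : ℕ → S → ℝ) (n ι : ℝ),
        h₀ ≤ H → 1 ≤ n → 1 ≤ ι →
        (∀ h, h₀ ≤ h → h ≤ H → (∀ s, 0 ≤ d h s) ∧ (∑ s, d h s) = 1) →
        (∀ h s, h₀ ≤ h → h ≤ H → 0 ≤ σ h s) →
        (∀ h s, h₀ ≤ h → h ≤ H →
          b h s ≤ 2 * Real.sqrt (σ h s * ι / n) + 3 * (H : ℝ) * ι / n) →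
        (∑ h ∈ Finset.Icc h₀ H, ∑ s, d h s * σ h s)
          ≤ 4 * (H : ℝ) * (∑ h ∈ Finset.Icc h₀ H, ∑ s, d h s * b h s) + 2 * (H : ℝ) ^ 2 →
        (∑ h ∈ Finset.Icc h₀ H, ∑ s, d h s * b h s)
          ≤ C * (Real.sqrt ((H : ℝ) ^ 3 * ι / n) + (H : ℝ) ^ 2 * ι / n) := by
  refine ⟨44, by norm_num, ?_⟩
  intro S _ h₀ H d σ b n ι hH hn hι hd hσ hb hV
  set F := Finset.Icc h₀ H with hF
  set B := ∑ h ∈ F, ∑ s, d h s * b h s with hBdef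
  set V := ∑ h ∈ F, ∑ s, d h s * σ h s with hVdef
  have hn0 : (0:ℝ) < n := lt_of_lt_of_le one_pos hn
  have hι0 : (0:ℝ) ≤ ι := le_trans zero_le_one hι
  have hιn : (0:ℝ) ≤ ι / n := div_nonneg hι0 hn0.le
  have hH0 : (0:ℝ) ≤ (H:ℝ) := Nat.cast_nonneg _
  have hRHS : (0:ℝ) ≤ Real.sqrt ((H:ℝ)^3 * ι / n) + (H:ℝ)^2 * ι / n := by positivity
  rcases le_or_gt B 0 with hB0 | hB0
  · nlinarith
  -- main case: B > 0
  set N : ℝ := (F.card : ℝ) with hNdef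
  have hN0 : (0:ℝ) ≤ N := Nat.cast_nonneg _
  set p := Real.sqrt (ι / n) with hpdef
  set q := Real.sqrt N with hqdef
  set r := Real.sqrt (H:ℝ) with hrdef
  set x := Real.sqrt B with hxdef
  have hp0 : 0 ≤ p := Real.sqrt_nonneg _
  have hq0 : 0 ≤ q := Real.sqrt_nonneg _
  have hr0 : 0 ≤ r := Real.sqrt_nonneg _
  have hx0 : 0 ≤ x := Real.sqrt_nonneg _
  have hp2 : p ^ 2 = ι / n := Real.sq_sqrt hιn
  have hq2 : q ^ 2 = N := Real.sq_sqrt hN0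
  have hr2 : r ^ 2 = (H:ℝ) := Real.sq_sqrt hH0
  have hx2 : x ^ 2 = B := Real.sq_sqrt hB0.le
  set T := ∑ h ∈ F, ∑ s, d h s * Real.sqrt (σ h s) with hTdef
  -- Step 1 : B ≤ 2 p T + 3 H (ι/n) N
  have step1 : B ≤ 2 * p * T + 3 * (H:ℝ) * (ι / n) * N := by
    have hrow : ∀ h ∈ F, ∑ s, d h s * b h s
        ≤ 2 * p * (∑ s, d h s * Real.sqrt (σ h s)) + 3 * (H:ℝ) * (ι / n) := by
      intro h hmem
      obtain ⟨h1, h2⟩ := Finset.mem_Icc.mp hmem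
      have hd0 := (hd h h1 h2).1
      have hsum1 := (hd h h1 h2).2
      calc ∑ s, d h s * b h s
          ≤ ∑ s, d h s * (2 * Real.sqrt (σ h s * ι / n) + 3 * (H:ℝ) * ι / n) :=
            Finset.sum_le_sum fun s _ => mul_le_mul_of_nonneg_left (hb h s h1 h2) (hd0 s)
        _ = ∑ s, (2 * p * (d h s * Real.sqrt (σ h s)) + 3 * (H:ℝ) * (ι / n) * d h s) := by
            refine Finset.sum_congr rfl fun s _ => ?_
            rw [mul_div_assoc, Real.sqrt_mul (hσ h s h1 h2)]
            ring
        _ = 2 * p * (∑ s, d h s * Real.sqrt (σ h s)) + 3 * (H:ℝ) * (ι / n) * (∑ s, d h s) := by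
            rw [Finset.sum_add_distrib, ← Finset.mul_sum, ← Finset.mul_sum]
        _ = 2 * p * (∑ s, d h s * Real.sqrt (σ h s)) + 3 * (H:ℝ) * (ι / n) := by
            rw [hsum1, mul_one]
    calc B ≤ ∑ h ∈ F, (2 * p * (∑ s, d h s * Real.sqrt (σ h s)) + 3 * (H:ℝ) * (ι / n)) :=
          Finset.sum_le_sum hrow
      _ = 2 * p * T + 3 * (H:ℝ) * (ι / n) * N := by
          rw [Finset.sum_add_distrib, ← Finset.mul_sum, Finset.sum_const, nsmul_eq_mul, hTdef]
          ring
  -- Cauchy–Schwarz : T² ≤ N V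
  have hT0 : 0 ≤ T := by
    refine Finset.sum_nonneg fun h hmem => Finset.sum_nonneg fun s _ => ?_
    obtain ⟨h1, h2⟩ := Finset.mem_Icc.mp hmem
    exact mul_nonneg ((hd h h1 h2).1 s) (Real.sqrt_nonneg _)
  have hV0 : 0 ≤ V := by
    refine Finset.sum_nonneg fun h hmem => Finset.sum_nonneg fun s _ => ?_
    obtain ⟨h1, h2⟩ := Finset.mem_Icc.mp hmem
    exact mul_nonneg ((hd h h1 h2).1 s) (hσ h s h1 h2)
  have hT2 : T ^ 2 ≤ N * V := by
    have key := Finset.sum_mul_sq_le_sq_mul_sq (F ×ˢ (Finset.univ : Finset S))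
      (fun pr => Real.sqrt (d pr.1 pr.2)) (fun pr => Real.sqrt (d pr.1 pr.2 * σ pr.1 pr.2))
    have e1 : ∑ pr ∈ F ×ˢ (Finset.univ : Finset S),
        Real.sqrt (d pr.1 pr.2) * Real.sqrt (d pr.1 pr.2 * σ pr.1 pr.2) = T := by
      rw [Finset.sum_product]
      refine Finset.sum_congr rfl fun h hmem => Finset.sum_congr rfl fun s _ => ?_
      obtain ⟨h1, h2⟩ := Finset.mem_Icc.mp hmem
      have hd0 := (hd h h1 h2).1 s
      rw [← Real.sqrt_mul hd0, show d h s * (d h s * σ h s) = (d h s) ^ 2 * σ h s by ring,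
        Real.sqrt_mul (sq_nonneg _), Real.sqrt_sq hd0]
    have e2 : ∑ pr ∈ F ×ˢ (Finset.univ : Finset S), (Real.sqrt (d pr.1 pr.2)) ^ 2 = N := by
      rw [Finset.sum_product]
      have : ∀ h ∈ F, ∑ s, (Real.sqrt (d h s)) ^ 2 = 1 := by
        intro h hmem
        obtain ⟨h1, h2⟩ := Finset.mem_Icc.mp hmem
        rw [← (hd h h1 h2).2]
        exact Finset.sum_congr rfl fun s _ => Real.sq_sqrt ((hd h h1 h2).1 s)
      rw [Finset.sum_congr rfl this, Finset.sum_const, nsmul_eq_mul, mul_one]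
    have e3 : ∑ pr ∈ F ×ˢ (Finset.univ : Finset S),
        (Real.sqrt (d pr.1 pr.2 * σ pr.1 pr.2)) ^ 2 = V := by
      rw [Finset.sum_product]
      refine Finset.sum_congr rfl fun h hmem => Finset.sum_congr rfl fun s _ => ?_
      obtain ⟨h1, h2⟩ := Finset.mem_Icc.mp hmem
      exact Real.sq_sqrt (mul_nonneg ((hd h h1 h2).1 s) (hσ h s h1 h2))
    rw [e1, e2, e3] at key
    exact key
  have hTle : T ≤ q * Real.sqrt V := by
    calc T = Real.sqrt (T ^ 2) := (Real.sqrt_sq hT0).symm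
      _ ≤ Real.sqrt (N * V) := Real.sqrt_le_sqrt hT2
      _ = q * Real.sqrt V := by rw [Real.sqrt_mul hN0]
  -- √V ≤ 2 r x + √2 r²
  have hsqrtV : Real.sqrt V ≤ 2 * r * x + Real.sqrt 2 * r ^ 2 := by
    have h4HB : (0:ℝ) ≤ 4 * (H:ℝ) * B := by
      have := mul_nonneg hH0 hB0.le; linarith
    have eA : Real.sqrt (4 * (H:ℝ) * B) = 2 * r * x := by
      rw [show 4 * (H:ℝ) * B = (2 * r * x) ^ 2 by rw [← hr2, ← hx2]; ring,
        Real.sqrt_sq (by positivity)]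
    have eB : Real.sqrt (2 * (H:ℝ) ^ 2) = Real.sqrt 2 * r ^ 2 := by
      rw [show 2 * (H:ℝ) ^ 2 = (Real.sqrt 2 * r ^ 2) ^ 2 by
          rw [mul_pow, Real.sq_sqrt (by norm_num : (0:ℝ) ≤ 2), hr2],
        Real.sqrt_sq (by positivity)]
    calc Real.sqrt V ≤ Real.sqrt (4 * (H:ℝ) * B + 2 * (H:ℝ) ^ 2) := Real.sqrt_le_sqrt hV
      _ ≤ Real.sqrt (4 * (H:ℝ) * B) + Real.sqrt (2 * (H:ℝ) ^ 2) :=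
          sqrt_add_le' h4HB (by positivity)
      _ = 2 * r * x + Real.sqrt 2 * r ^ 2 := by rw [eA, eB]
  have hTbound : T ≤ q * (2 * r * x + Real.sqrt 2 * r ^ 2) :=
    hTle.trans (mul_le_mul_of_nonneg_left hsqrtV hq0)
  -- combine
  have h3 : B ≤ 4 * p * q * r * x + 2 * Real.sqrt 2 * p * q * r ^ 2 + 3 * p ^ 2 * q ^ 2 * r ^ 2 := by
    have h2pT : 2 * p * T ≤ 2 * p * (q * (2 * r * x + Real.sqrt 2 * r ^ 2)) :=
      mul_le_mul_of_nonneg_left hTbound (by positivity)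
    have heq : 3 * (H:ℝ) * (ι / n) * N = 3 * p ^ 2 * q ^ 2 * r ^ 2 := by
      rw [hp2, hq2, hr2]; ring
    calc B ≤ 2 * p * T + 3 * (H:ℝ) * (ι / n) * N := step1
      _ ≤ 2 * p * (q * (2 * r * x + Real.sqrt 2 * r ^ 2)) + 3 * (H:ℝ) * (ι / n) * N := by
          linarith
      _ = 4 * p * q * r * x + 2 * Real.sqrt 2 * p * q * r ^ 2 + 3 * p ^ 2 * q ^ 2 * r ^ 2 := by
          rw [heq]; ring
  -- self-bounding rearrangement
  have hax : 4 * (p * q * r) * x ≤ x ^ 2 / 2 + 8 * (p * q * r) ^ 2 := by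
    nlinarith [sq_nonneg (x - 4 * (p * q * r))]
  have hfin0 : B ≤ 4 * Real.sqrt 2 * p * q * r ^ 2 + 22 * p ^ 2 * q ^ 2 * r ^ 2 := by
    linarith [h3, hax, hx2]
  -- counting facts
  have hcard : F.card ≤ H + 1 := by rw [hF, Nat.card_Icc]; omega
  have natfact1 : F.card * H ^ 2 ≤ 2 * H ^ 3 := by
    rcases Nat.eq_zero_or_pos H with h | h
    · simp [h]
    · have h2 : H + 1 ≤ 2 * H := by omega
      calc F.card * H ^ 2 ≤ (2 * H) * H ^ 2 := Nat.mul_le_mul_right _ (hcard.trans h2)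
        _ = 2 * H ^ 3 := by ring
  have natfact2 : F.card * H ≤ 2 * H ^ 2 := by
    rcases Nat.eq_zero_or_pos H with h | h
    · simp [h]
    · have h2 : H + 1 ≤ 2 * H := by omega
      calc F.card * H ≤ (2 * H) * H := Nat.mul_le_mul_right _ (hcard.trans h2)
        _ = 2 * H ^ 2 := by ring
  have c1 : N * (H:ℝ) ^ 2 ≤ 2 * (H:ℝ) ^ 3 := by
    rw [hNdef]; exact_mod_cast natfact1
  have c2 : N * (H:ℝ) ≤ 2 * (H:ℝ) ^ 2 := by
    rw [hNdef]; exact_mod_cast natfact2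
  have hm1 : q * (H:ℝ) ≤ Real.sqrt 2 * ((H:ℝ) * r) := by
    calc q * (H:ℝ) = Real.sqrt (N * (H:ℝ) ^ 2) := by
          rw [Real.sqrt_mul hN0, Real.sqrt_sq hH0]
      _ ≤ Real.sqrt (2 * (H:ℝ) ^ 3) := Real.sqrt_le_sqrt c1
      _ = Real.sqrt 2 * ((H:ℝ) * r) := by
          rw [Real.sqrt_mul (by norm_num : (0:ℝ) ≤ 2),
            show (H:ℝ) ^ 3 = (H:ℝ) ^ 2 * (H:ℝ) by ring,
            Real.sqrt_mul (sq_nonneg _), Real.sqrt_sq hH0]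
  have hm2 : q ^ 2 * (H:ℝ) ≤ 2 * (H:ℝ) ^ 2 := by rw [hq2]; exact c2
  -- rewrite target
  have etarget1 : Real.sqrt ((H:ℝ) ^ 3 * ι / n) = p * ((H:ℝ) * r) := by
    rw [show (H:ℝ) ^ 3 * ι / n = ((H:ℝ) ^ 2 * (H:ℝ)) * (ι / n) by ring,
      Real.sqrt_mul (by positivity), Real.sqrt_mul (sq_nonneg _), Real.sqrt_sq hH0]
    ring
  have etarget2 : (H:ℝ) ^ 2 * ι / n = (H:ℝ) ^ 2 * p ^ 2 := by
    rw [hp2]; ring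
  rw [etarget1, etarget2]
  -- final combination
  have hfin : B ≤ 4 * Real.sqrt 2 * (p * (q * (H:ℝ))) + 22 * (p ^ 2 * (q ^ 2 * (H:ℝ))) := by
    rw [← hr2]; linarith [hfin0]
  have hA1 : 4 * Real.sqrt 2 * p * (q * (H:ℝ))
      ≤ 4 * Real.sqrt 2 * p * (Real.sqrt 2 * ((H:ℝ) * r)) :=
    mul_le_mul_of_nonneg_left hm1 (by positivity)
  have hA1' : 4 * Real.sqrt 2 * p * (Real.sqrt 2 * ((H:ℝ) * r)) = 8 * (p * ((H:ℝ) * r)) := by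
    rw [show 4 * Real.sqrt 2 * p * (Real.sqrt 2 * ((H:ℝ) * r))
        = 4 * (Real.sqrt 2 * Real.sqrt 2) * (p * ((H:ℝ) * r)) by ring,
      Real.mul_self_sqrt (by norm_num : (0:ℝ) ≤ 2)]
    ring
  have hA2 : 22 * p ^ 2 * (q ^ 2 * (H:ℝ)) ≤ 22 * p ^ 2 * (2 * (H:ℝ) ^ 2) :=
    mul_le_mul_of_nonneg_left hm2 (by positivity)
  linarith [hfin, hA1, hA1', hA2, mul_nonneg hp0 (mul_nonneg hH0 hr0)]
end

section
/- In the lower-bound MDP family: for each parameter matrix φ ∈ [A]^{H×S}, the MDP M_φ (horizon 2H+1, states s₁,…,s_S plus absorbing good/bad states, where at step h ≤ H in state s_i every action leads back to s_i with probability 1 − 1/H and to the good/bad states with probabilities 1/(2H)(1 ± 2τ·1{a = a_{φ_{h,i}}} with sign + for good under the optimal action, else 1/(2H) each), and reaching the good state yields total reward H) has minimum suboptimality gap exactly τ: for every h ∈ [H], state s_i, and non-optimal action a ≠ a_{φ_{h,i}}, V*ₕ(s_i) − Q*ₕ(s_i, a) = τ. -/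
/-- Transition kernel of the lower-bound MDP `M_φ`.  States are `Sum.inl i`
(true states `s_i`), `Sum.inr true` (good absorbing state) and `Sum.inr false`
(bad absorbing state).  For `h ≤ H`, in `s_i` every action stays in `s_i` with
probability `1 - 1/H` and moves to the good/bad states with probabilities
`(1 ± 2τ·1{a = φ h i})/(2H)`; at step `H + 1` the true states split `1/2`–`1/2`
between good and bad; the good and bad states are absorbing. -/
noncomputable def lbP (H : ℕ) (τ : ℝ) (Sn An : ℕ) (φ : ℕ → Fin Sn → Fin An) :
    ℕ → (Fin Sn ⊕ Bool) → Fin An → (Fin Sn ⊕ Bool) → ℝ :=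
  fun h s a s' =>
    match s, s' with
    | Sum.inl i, Sum.inl j =>
        if h ≤ H ∧ j = i then 1 - 1 / (H : ℝ) else 0
    | Sum.inl i, Sum.inr good =>
        if h ≤ H then
          (1 / (2 * (H : ℝ))) *
            (1 + (if a = φ h i then (if good then 2 * τ else -(2 * τ)) else 0))
        else if h = H + 1 then (1 / 2 : ℝ) else 0
    | Sum.inr good, Sum.inr good' => if good' = good then 1 else 0
    | Sum.inr _, Sum.inl _ => 0

/-- Reward of the lower-bound MDP: reward `1` in the good state at every step
`h ≥ H + 2` (so reaching the good state yields total reward `H` over the horizon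
`2H + 1`), and `0` everywhere else. -/
noncomputable def lbr (H : ℕ) (Sn An : ℕ) :
    ℕ → (Fin Sn ⊕ Bool) → Fin An → ℝ :=
  fun h s _ => if s = Sum.inr true ∧ H + 2 ≤ h then 1 else 0


/-! If `πstar` took a non-optimal action at `(h, s_i)`, switching to `φ h i` at that single
point would raise the value by `τ`, since the continuation values do not change and the
good state, worth `H` from step `h + 1` on, is reached with probability larger by `τ / H`.
Optimality of `πstar` therefore forces `πstar h s_i = φ h i`, and the gap of any other action
is exactly this `τ`. -/

section FiniteHorizon

variable {S A : Type} [Fintype S] (P : ℕ → S → A → S → ℝ) (r : ℕ → S → A → ℝ)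

/-- Take `a` in `s` at step `h`, then follow `π` for `n` further steps. -/
noncomputable def qval (π : ℕ → S → A) (n h : ℕ) (s : S) (a : A) : ℝ :=
  r h s a + ∑ s', P h s a s' * val P r π n (h + 1) s'

theorem val_succ (π : ℕ → S → A) (n h : ℕ) (s : S) :
    val P r π (n + 1) h s = qval P r π n h s (π h s) :=
  rfl

theorem val_congr_of_eq_of_le {π π' : ℕ → S → A} {h : ℕ}
    (hπ : ∀ t, h ≤ t → π t = π' t) (n : ℕ) (s : S) :
    val P r π n h s = val P r π' n h s := by
  induction n generalizing h s with
  | zero => rfl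
  | succ n ih =>
    simp only [val, hπ h le_rfl, ih fun t ht => hπ t (Nat.le_of_succ_le ht)]

theorem val_update_succ [DecidableEq S] (π : ℕ → S → A) (n h : ℕ) (s : S) (a : A) :
    val P r (Function.update π h (Function.update (π h) s a)) (n + 1) h s
      = qval P r π n h s a := by
  have hlater : ∀ t, h + 1 ≤ t → Function.update π h (Function.update (π h) s a) t = π t :=
    fun t ht => Function.update_of_ne (by omega) _ _
  simp only [val_succ, qval, val_congr_of_eq_of_le P r hlater, Function.update_self]

theorem qval_le_val_of_forall_val_le [DecidableEq S] {πstar : ℕ → S → A}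
    (hopt : ∀ π n h s, val P r π n h s ≤ val P r πstar n h s) (n h : ℕ) (s : S) (a : A) :
    qval P r πstar n h s a ≤ val P r πstar (n + 1) h s := by
  rw [← val_update_succ]
  exact hopt _ _ _ _

end FiniteHorizon

section LowerBoundMDP

variable {H Sn An : ℕ} {τ : ℝ} {φ : ℕ → Fin Sn → Fin An}
  (π : ℕ → (Fin Sn ⊕ Bool) → Fin An)

theorem lb_val_bad (n h : ℕ) :
    val (lbP H τ Sn An φ) (lbr H Sn An) π n h (Sum.inr false) = 0 := by
  induction n generalizing h with
  | zero => rfl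
  | succ n ih => simp [val, lbP, lbr, Fintype.sum_sum_type, ih]

/-- The good state earns `1` at each of the steps `t, …, t + n - 1` that are `≥ H + 2`. -/
theorem lb_val_good (n t : ℕ) :
    val (lbP H τ Sn An φ) (lbr H Sn An) π n t (Sum.inr true)
      = ((t + n - max t (H + 2) : ℕ) : ℝ) := by
  induction n generalizing t with
  | zero => simp [val]
  | succ n ih =>
    simp only [val, lbP, lbr, Fintype.sum_sum_type, Fintype.sum_bool, ih, lb_val_bad]
    by_cases ht : H + 2 ≤ t
    · have hcount : t + (n + 1) - max t (H + 2) = t + 1 + n - max (t + 1) (H + 2) + 1 := by omega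
      rw [hcount, Nat.cast_succ]
      simp [ht, add_comm]
    · have hcount : t + (n + 1) - max t (H + 2) = t + 1 + n - max (t + 1) (H + 2) := by omega
      rw [hcount]
      simp [ht]

theorem lb_qval_true_state {h : ℕ} (hh1 : 1 ≤ h) (hhH : h ≤ H) (i : Fin Sn) (a : Fin An) :
    qval (lbP H τ Sn An φ) (lbr H Sn An) π (2 * H + 1 - h) h (Sum.inl i) a
      = (1 - 1 / (H : ℝ))
          * val (lbP H τ Sn An φ) (lbr H Sn An) π (2 * H + 1 - h) (h + 1) (Sum.inl i)
        + (1 + if a = φ h i then 2 * τ else 0) / 2 := by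
  have hgood : h + 1 + (2 * H + 1 - h) - max (h + 1) (H + 2) = H := by omega
  have hH : (H : ℝ) ≠ 0 := by norm_cast; omega
  simp only [qval, Fintype.sum_sum_type, Fintype.sum_bool, lb_val_good, lb_val_bad, hgood]
  simp only [lbr, reduceCtorEq, false_and, ↓reduceIte, lbP, hhH, true_and, one_div, ite_mul,
    zero_mul, Finset.sum_ite_eq', Finset.mem_univ, mul_inv_rev, Bool.false_eq_true, mul_zero,
    add_zero, zero_add, add_right_inj]
  field_simp

end LowerBoundMDP

theorem stmt_19_general (H : ℕ) (τ : ℝ) (hτ0 : 0 < τ)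
    (Sn An : ℕ) (φ : ℕ → Fin Sn → Fin An)
    (πstar : ℕ → (Fin Sn ⊕ Bool) → Fin An)
    (hopt : ∀ (π : ℕ → (Fin Sn ⊕ Bool) → Fin An) n h s,
      val (lbP H τ Sn An φ) (lbr H Sn An) π n h s
        ≤ val (lbP H τ Sn An φ) (lbr H Sn An) πstar n h s) :
    ∀ h ∈ Finset.Icc 1 H, ∀ (i : Fin Sn) (a : Fin An), a ≠ φ h i →
      val (lbP H τ Sn An φ) (lbr H Sn An) πstar (2 * H + 2 - h) h (Sum.inl i)
        - (lbr H Sn An h (Sum.inl i) a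
            + ∑ s', lbP H τ Sn An φ h (Sum.inl i) a s' *
                val (lbP H τ Sn An φ) (lbr H Sn An) πstar (2 * H + 1 - h) (h + 1) s')
        = τ := by
  intro h hh i a ha
  obtain ⟨hh1, hhH⟩ := Finset.mem_Icc.mp hh
  have hQ := lb_qval_true_state (τ := τ) (φ := φ) πstar hh1 hhH i
  have hbest := qval_le_val_of_forall_val_le _ _ hopt (2 * H + 1 - h) h (Sum.inl i) (φ h i)
  rw [val_succ, hQ, hQ, if_pos rfl] at hbest
  have hstar : πstar h (Sum.inl i) = φ h i := by
    by_contra hne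
    rw [if_neg hne] at hbest
    linarith
  change val _ _ _ _ h _ - qval _ _ _ _ h _ a = τ
  rw [show 2 * H + 2 - h = 2 * H + 1 - h + 1 by omega, val_succ, hQ, hQ, hstar, if_pos rfl,
    if_neg ha]
  ring

/-- In the lower-bound MDP `M_φ` (horizon `2H + 1`), every non-optimal action
`a ≠ φ h i` at a true state `s_i`, `h ∈ [H]`, has suboptimality gap exactly `τ`:
`V*ₕ(s_i) - Q*ₕ(s_i, a) = τ`. -/
theorem stmt_19 (H : ℕ) (hH : 2 ≤ H) (τ : ℝ) (hτ0 : 0 < τ) (hτ1 : τ < 1 / 2)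
    (Sn An : ℕ) (φ : ℕ → Fin Sn → Fin An)
    (πstar : ℕ → (Fin Sn ⊕ Bool) → Fin An)
    (hopt : ∀ (π : ℕ → (Fin Sn ⊕ Bool) → Fin An) n h s,
      val (lbP H τ Sn An φ) (lbr H Sn An) π n h s
        ≤ val (lbP H τ Sn An φ) (lbr H Sn An) πstar n h s) :
    ∀ h ∈ Finset.Icc 1 H, ∀ (i : Fin Sn) (a : Fin An), a ≠ φ h i →
      val (lbP H τ Sn An φ) (lbr H Sn An) πstar (2 * H + 2 - h) h (Sum.inl i)
        - (lbr H Sn An h (Sum.inl i) a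
            + ∑ s', lbP H τ Sn An φ h (Sum.inl i) a s' *
                val (lbP H τ Sn An φ) (lbr H Sn An) πstar (2 * H + 1 - h) (h + 1) s')
        = τ :=
  stmt_19_general H τ hτ0 Sn An φ πstar hopt
end
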